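/- Let p ∈ (0,1], let ε ∈ [0, 1/4), let ℓ ≥ 2 be a natural number, and let ε₁, ε_{ℓ−1}, ε_ℓ be real numbers with |ε₁| ≤ ε, |ε_{ℓ−1}| ≤ ε, and |ε_ℓ| ≤ ε. Suppose that p^(2^ℓ) + ε_ℓ ≤ (1 + ε₁)/3 and that p^(2^(ℓ−1)) + ε_{ℓ−1} > (1 + ε₁)/3. Then, setting m = 2^ℓ, one has (1 − 4ε)²/9 < p^m ≤ (1 + 4ε)/3. -/

import Mathlib

/-!
Both bounds come from the two loop conditions by moving the errors across: each of
`ε₁, ε_{ℓ-1}, ε_ℓ` costs at most `ε`, and the `1/3` in front of `ε₁` makes the total loss `4ε/3`.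
The exit condition bounds `p^(2^ℓ)` from above directly; the non-exit condition bounds
`p^(2^(ℓ-1))` from below by `(1 - 4ε)/3 ≥ 0`, and squaring gives the lower bound on
`p^(2^ℓ) = (p^(2^(ℓ-1)))²`.
-/

lemma le_of_add_le_one_add_div_three {x e e₁ ε : ℝ} (he : |e| ≤ ε) (he₁ : |e₁| ≤ ε)
    (h : x + e ≤ (1 + e₁) / 3) : x ≤ (1 + 4 * ε) / 3 := by
  linarith [neg_abs_le e, le_abs_self e₁]

lemma lt_of_one_add_div_three_lt_add {y e e₁ ε : ℝ} (he : |e| ≤ ε) (he₁ : |e₁| ≤ ε)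
    (h : (1 + e₁) / 3 < y + e) : (1 - 4 * ε) / 3 < y := by
  linarith [le_abs_self e, neg_abs_le e₁]

lemma pow_two_pow_eq_sq_pow_two_pow_pred {M : Type*} [Monoid M] (x : M) {n : ℕ} (hn : n ≠ 0) :
    x ^ 2 ^ n = (x ^ 2 ^ (n - 1)) ^ 2 := by
  rw [← pow_mul, ← pow_succ, Nat.sub_add_cancel (Nat.one_le_iff_ne_zero.mpr hn)]

theorem stmt_1_general (p ε : ℝ)
    (hε : ε < 1 / 4)
    (ℓ : ℕ) (hℓ : 2 ≤ ℓ)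
    (ε₁ εℓ₁ εℓ : ℝ) (h₁ : |ε₁| ≤ ε) (hℓ₁ : |εℓ₁| ≤ ε) (hℓ' : |εℓ| ≤ ε)
    (hexit : p ^ (2 ^ ℓ) + εℓ ≤ (1 + ε₁) / 3)
    (hnoexit : (1 + ε₁) / 3 < p ^ (2 ^ (ℓ - 1)) + εℓ₁) :
    (1 - 4 * ε) ^ 2 / 9 < p ^ (2 ^ ℓ) ∧ p ^ (2 ^ ℓ) ≤ (1 + 4 * ε) / 3 := by
  refine ⟨?_, le_of_add_le_one_add_div_three hℓ' h₁ hexit⟩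
  have hhalf := lt_of_one_add_div_three_lt_add hℓ₁ h₁ hnoexit
  calc (1 - 4 * ε) ^ 2 / 9 = ((1 - 4 * ε) / 3) ^ 2 := by ring
    _ < (p ^ 2 ^ (ℓ - 1)) ^ 2 := pow_lt_pow_left₀ hhalf (by linarith) two_ne_zero
    _ = p ^ 2 ^ ℓ := (pow_two_pow_eq_sq_pow_two_pow_pred p (by omega)).symm

/-- Algebraic core of Lemma 2 (exit/non-exit conditions of the while loop):
if the algorithm exits at round `ℓ` (i.e. `p^(2^ℓ) + ε_ℓ ≤ (1 + ε₁)/3`) but did not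
exit at round `ℓ - 1` (i.e. `p^(2^(ℓ-1)) + ε_{ℓ-1} > (1 + ε₁)/3`), and all estimation
errors are bounded by `ε < 1/4`, then `(1 - 4ε)²/9 < p^m ≤ (1 + 4ε)/3` for `m = 2^ℓ`. -/
theorem stmt_1 (p ε : ℝ) (hp0 : 0 < p) (hp1 : p ≤ 1)
    (hε0 : 0 ≤ ε) (hε : ε < 1 / 4)
    (ℓ : ℕ) (hℓ : 2 ≤ ℓ)
    (ε₁ εℓ₁ εℓ : ℝ) (h₁ : |ε₁| ≤ ε) (hℓ₁ : |εℓ₁| ≤ ε) (hℓ' : |εℓ| ≤ ε)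
    (hexit : p ^ (2 ^ ℓ) + εℓ ≤ (1 + ε₁) / 3)
    (hnoexit : (1 + ε₁) / 3 < p ^ (2 ^ (ℓ - 1)) + εℓ₁) :
    (1 - 4 * ε) ^ 2 / 9 < p ^ (2 ^ ℓ) ∧ p ^ (2 ^ ℓ) ≤ (1 + 4 * ε) / 3 :=
  stmt_1_general p ε hε ℓ hℓ ε₁ εℓ₁ εℓ h₁ hℓ₁ hℓ' hexit hnoexit
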